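/- arXiv:2402.07316 — 3 statements merged into one kernel-verified Lean document; each statement's English description precedes it below -/
import Mathlib

section
/- Suppose x₁,…,xₙ : ℝ → ℝ² are differentiable and solve the point vortex ODE x_i'(t) = Σ_{j≠i} m_j K(x_i(t), x_j(t)) on an interval I, with x_i(t) ≠ x_j(t) for i ≠ j on I. Then the weighted sum X(t) = Σ_i m_i x_i(t) is constant on I. -/
open scoped RealInnerProductSpace

noncomputable def perp (z : EuclideanSpace ℝ (Fin 2)) : EuclideanSpace ℝ (Fin 2) :=
  WithLp.toLp 2 (fun i : Fin 2 => if i = 0 then -(z 1) else z 0)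

noncomputable def K (x y : EuclideanSpace ℝ (Fin 2)) : EuclideanSpace ℝ (Fin 2) :=
  (‖x - y‖ ^ 2)⁻¹ • perp (x - y)

/-!
Each pair of vortices `i ≠ j` contributes `m i m j K(x i, x j)` to the derivative of
`∑ i, m i • x i`, and since `K` is antisymmetric these contributions cancel in pairs.
A function with zero derivative on an interval is constant there.
-/

open Finset

lemma perp_neg (z : EuclideanSpace ℝ (Fin 2)) : perp (-z) = -perp z := by
  ext i
  simp only [perp, PiLp.neg_apply, PiLp.toLp_apply]
  split <;> simp

lemma K_swap (x y : EuclideanSpace ℝ (Fin 2)) : K y x = -K x y := by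
  rw [K, K, ← neg_sub x y, perp_neg, norm_neg, smul_neg]

lemma Finset.sum_sum_erase_eq_zero_of_antisymm {ι M : Type*} [DecidableEq ι] [AddCommGroup M]
    (s : Finset ι) {a : ι → ι → M} (ha : ∀ i j, a j i = -a i j) :
    ∑ i ∈ s, ∑ j ∈ s.erase i, a i j = 0 := by
  rw [sum_sigma']
  refine sum_involution (fun p _ => ⟨p.2, p.1⟩) (fun p _ => by rw [ha]; exact neg_add_cancel _) ?_ ?_
    fun _ _ => rfl
  · rintro ⟨i, j⟩ hp - h
    simp only [mem_sigma, mem_erase] at hp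
    exact hp.2.1 (congrArg Sigma.fst h)
  · rintro ⟨i, j⟩ hp
    simp only [mem_sigma, mem_erase] at hp ⊢
    exact ⟨hp.2.2, hp.2.1.symm, hp.1⟩

noncomputable def vortexVelocity {ι : Type*} [Fintype ι] [DecidableEq ι] (m : ι → ℝ)
    (z : ι → EuclideanSpace ℝ (Fin 2)) (i : ι) : EuclideanSpace ℝ (Fin 2) :=
  ∑ j ∈ univ.erase i, m j • K (z i) (z j)

lemma sum_smul_vortexVelocity {ι : Type*} [Fintype ι] [DecidableEq ι] (m : ι → ℝ)
    (z : ι → EuclideanSpace ℝ (Fin 2)) : ∑ i, m i • vortexVelocity m z i = 0 := by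
  simp only [vortexVelocity, smul_sum]
  refine univ.sum_sum_erase_eq_zero_of_antisymm fun i j => ?_
  rw [K_swap, smul_neg, smul_neg, smul_comm (m j) (m i)]

lemma Convex.eq_of_hasDerivWithinAt_zero {E : Type*} [NormedAddCommGroup E] [NormedSpace ℝ E]
    {f : ℝ → E} {s : Set ℝ} (hs : Convex ℝ s) (hf : ∀ t ∈ s, HasDerivWithinAt f 0 s t)
    {a b : ℝ} (ha : a ∈ s) (hb : b ∈ s) : f a = f b := by
  have h := hs.norm_image_sub_le_of_norm_hasDerivWithin_le (C := 0) hf (fun _ _ => by simp) ha hb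
  rw [zero_mul, norm_le_zero_iff, sub_eq_zero] at h
  exact h.symm

theorem center_of_mass_conserved_general (n : ℕ) (m : Fin n → ℝ)
    (x : Fin n → ℝ → EuclideanSpace ℝ (Fin 2)) (I : Set ℝ) (hI : I.OrdConnected)
    (hode : ∀ t ∈ I, ∀ i, HasDerivWithinAt (x i)
      (∑ j ∈ Finset.univ.erase i, m j • K (x i t) (x j t)) I t) :
    ∀ s ∈ I, ∀ t ∈ I, ∑ i, m i • x i s = ∑ i, m i • x i t := by
  have hderiv : ∀ t ∈ I, HasDerivWithinAt (fun t => ∑ i, m i • x i t) 0 I t := fun t ht => by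
    have h : HasDerivWithinAt (fun t => ∑ i, m i • x i t)
        (∑ i, m i • vortexVelocity m (x · t) i) I t :=
      HasDerivWithinAt.fun_sum fun i _ => (hode t ht i).const_smul (m i)
    rwa [sum_smul_vortexVelocity] at h
  exact fun s hs t ht => hI.convex.eq_of_hasDerivWithinAt_zero hderiv hs ht

theorem center_of_mass_conserved (n : ℕ) (m : Fin n → ℝ) (hm : ∀ i, m i ≠ 0)
    (x : Fin n → ℝ → EuclideanSpace ℝ (Fin 2)) (I : Set ℝ) (hI : I.OrdConnected)
    (hsep : ∀ t ∈ I, ∀ i j, i ≠ j → x i t ≠ x j t)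
    (hode : ∀ t ∈ I, ∀ i, HasDerivWithinAt (x i)
      (∑ j ∈ Finset.univ.erase i, m j • K (x i t) (x j t)) I t) :
    ∀ s ∈ I, ∀ t ∈ I, ∑ i, m i • x i s = ∑ i, m i • x i t :=
  center_of_mass_conserved_general n m x I hI hode
end

section
/- Suppose x₁,…,xₙ : ℝ → ℝ² are differentiable and solve the point vortex ODE on an interval I, with x_i(t) ≠ x_j(t) for i ≠ j on I. Then the quantity Ĩ(t) = Σ_{i<j} m_i m_j |x_i(t) - x_j(t)|² is constant on I. -/
/-!
With `M = ∑ mᵢ`, expanding the squares gives `Ĩ = M ∑ mᵢ ‖xᵢ‖² - ‖∑ mᵢ xᵢ‖²`. The moment of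
inertia `∑ mᵢ ‖xᵢ‖²` and the centre of vorticity `∑ mᵢ xᵢ` are conserved by the flow of any
kernel `G` with `G y x = -G x y` and `⟪x - y, G x y⟫ = 0`: their time derivatives are double sums
over `(i, j)` in which the `(i, j)` and `(j, i)` terms cancel.
-/

open scoped RealInnerProductSpace

open Finset

lemma inner_perp_self (z : EuclideanSpace ℝ (Fin 2)) : ⟪z, perp z⟫ = 0 := by
  simp [PiLp.inner_apply, Fin.sum_univ_two, perp]
  ring

-- `0⁻¹ = 0` makes the self-interaction vanish, so the velocity may sum over all vortices.
lemma K_self (x : EuclideanSpace ℝ (Fin 2)) : K x x = 0 := by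
  simp [K]

lemma inner_sub_K (x y : EuclideanSpace ℝ (Fin 2)) : ⟪x - y, K x y⟫ = 0 := by
  rw [K, real_inner_smul_right, inner_perp_self, mul_zero]

theorem Finset.two_nsmul_sum_filter_fst_lt_snd {ι M : Type*} [Fintype ι] [LinearOrder ι]
    [AddCommMonoid M] (f : ι → ι → M) (hsymm : ∀ i j, f j i = f i j) (hdiag : ∀ i, f i i = 0) :
    2 • ∑ p ∈ univ.filter (fun p : ι × ι => p.1 < p.2), f p.1 p.2 = ∑ i, ∑ j, f i j := by
  have hnot_lt : ∑ p ∈ univ.filter (fun p : ι × ι => ¬ p.1 < p.2), f p.1 p.2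
      = ∑ p ∈ univ.filter (fun p : ι × ι => p.2 < p.1), f p.1 p.2 := by
    rw [← sum_filter_of_ne (p := fun p : ι × ι => p.2 < p.1), filter_filter]
    · exact sum_congr (filter_congr fun p _ => by simpa using le_of_lt) fun _ _ => rfl
    · intro p hp hne
      refine lt_of_le_of_ne (not_lt.mp (mem_filter.mp hp).2) fun heq => hne ?_
      rw [heq, hdiag]
  have hswap : ∑ p ∈ univ.filter (fun p : ι × ι => p.2 < p.1), f p.1 p.2
      = ∑ p ∈ univ.filter (fun p : ι × ι => p.1 < p.2), f p.1 p.2 :=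
    sum_equiv (Equiv.prodComm ι ι) (by simp) fun p _ => hsymm _ _
  rw [← Fintype.sum_prod_type', ← sum_filter_add_sum_filter_not univ
    (fun p : ι × ι => p.1 < p.2), hnot_lt, hswap, two_nsmul]

theorem Finset.sum_sum_eq_zero_of_antisymm {ι M : Type*} [Fintype ι] [AddCommGroup M]
    [IsAddTorsionFree M] (g : ι → ι → M) (hg : ∀ i j, g j i = -g i j) :
    ∑ i, ∑ j, g i j = 0 := by
  refine self_eq_neg.mp ?_
  calc ∑ i, ∑ j, g i j = ∑ i, ∑ j, g j i := sum_comm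
    _ = -∑ i, ∑ j, g i j := by
      simp only [← sum_neg_distrib]
      exact sum_congr rfl fun i _ => sum_congr rfl fun j _ => hg i j

theorem Set.OrdConnected.eq_of_hasDerivWithinAt_eq_zero {F : Type*} [NormedAddCommGroup F]
    [NormedSpace ℝ F] {f : ℝ → F} {I : Set ℝ} (hI : I.OrdConnected)
    (hf : ∀ t ∈ I, HasDerivWithinAt f 0 I t)
    {s t : ℝ} (hs : s ∈ I) (ht : t ∈ I) : f s = f t := by
  have h := (convex_iff_ordConnected.mpr hI).norm_image_sub_le_of_norm_hasDerivWithin_le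
    hf (fun _ _ => norm_zero.le) ht hs
  rw [zero_mul, norm_le_zero_iff, sub_eq_zero] at h
  exact h

section Interaction

variable {ι E : Type*} [Fintype ι] [NormedAddCommGroup E] [InnerProductSpace ℝ E]

def velocity (G : E → E → E) (m : ι → ℝ) (a : ι → E) (i : ι) : E :=
  ∑ j, m j • G (a i) (a j)

variable {G : E → E → E}

theorem sum_smul_velocity_eq_zero (hG : ∀ x y, G y x = -G x y) (m : ι → ℝ) (a : ι → E) :
    ∑ i, m i • velocity G m a i = 0 := by
  have := IsAddTorsionFree.of_isTorsionFree ℝ E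
  simp only [velocity, smul_sum, smul_smul]
  exact sum_sum_eq_zero_of_antisymm _ fun i j => by rw [hG, smul_neg, mul_comm]

theorem sum_mul_inner_velocity_eq_zero (hG : ∀ x y, G y x = -G x y)
    (hG_orth : ∀ x y, ⟪x - y, G x y⟫ = 0) (m : ι → ℝ) (a : ι → E) :
    ∑ i, m i * ⟪a i, velocity G m a i⟫ = 0 := by
  simp only [velocity, inner_sum, mul_sum, real_inner_smul_right]
  refine sum_sum_eq_zero_of_antisymm _ fun i j => ?_
  have h : ⟪a i, G (a i) (a j)⟫ = ⟪a j, G (a i) (a j)⟫ := by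
    rw [← sub_eq_zero, ← inner_sub_left, hG_orth]
  rw [hG, inner_neg_right, ← h]
  ring

theorem sum_filter_lt_mul_mul_norm_sub_sq [LinearOrder ι] (m : ι → ℝ) (a : ι → E) :
    ∑ p ∈ univ.filter (fun p : ι × ι => p.1 < p.2), m p.1 * m p.2 * ‖a p.1 - a p.2‖ ^ 2
      = (∑ i, m i) * (∑ i, m i * ‖a i‖ ^ 2) - ‖∑ i, m i • a i‖ ^ 2 := by
  have hhalf := two_nsmul_sum_filter_fst_lt_snd (fun i j => m i * m j * ‖a i - a j‖ ^ 2)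
    (fun i j => by rw [norm_sub_rev]; ring) (fun i => by simp)
  have hexpand : ∑ i, ∑ j, m i * m j * ‖a i - a j‖ ^ 2
      = 2 * ((∑ i, m i) * (∑ i, m i * ‖a i‖ ^ 2) - ‖∑ i, m i • a i‖ ^ 2) := by
    have hterm : ∀ i j, m i * m j * ‖a i - a j‖ ^ 2 = m j * (m i * ‖a i‖ ^ 2)
        + m i * (m j * ‖a j‖ ^ 2) - 2 * ⟪m i • a i, m j • a j⟫ := fun i j => by
      rw [norm_sub_sq_real, real_inner_smul_left, real_inner_smul_right]
      ring
    simp only [hterm, sum_add_distrib, sum_sub_distrib, ← mul_sum,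
      ← sum_mul, ← sum_inner, ← inner_sum, real_inner_self_eq_norm_sq]
    ring
  rw [two_nsmul, hexpand] at hhalf
  linarith

variable {x : ι → ℝ → E} {I : Set ℝ} {m : ι → ℝ}

theorem sum_smul_eq_of_hasDerivWithinAt_velocity (hG : ∀ x y, G y x = -G x y)
    (hI : I.OrdConnected)
    (hode : ∀ t ∈ I, ∀ i, HasDerivWithinAt (x i) (velocity G m (x · t) i) I t)
    {s t : ℝ} (hs : s ∈ I) (ht : t ∈ I) : ∑ i, m i • x i s = ∑ i, m i • x i t := by
  refine hI.eq_of_hasDerivWithinAt_eq_zero (f := fun τ => ∑ i, m i • x i τ)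
    (fun τ hτ => ?_) hs ht
  rw [← sum_smul_velocity_eq_zero hG m (x · τ)]
  exact HasDerivWithinAt.fun_sum fun i _ => (hode τ hτ i).const_smul (m i)

theorem sum_mul_norm_sq_eq_of_hasDerivWithinAt_velocity (hG : ∀ x y, G y x = -G x y)
    (hG_orth : ∀ x y, ⟪x - y, G x y⟫ = 0) (hI : I.OrdConnected)
    (hode : ∀ t ∈ I, ∀ i, HasDerivWithinAt (x i) (velocity G m (x · t) i) I t)
    {s t : ℝ} (hs : s ∈ I) (ht : t ∈ I) :
    ∑ i, m i * ‖x i s‖ ^ 2 = ∑ i, m i * ‖x i t‖ ^ 2 := by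
  refine hI.eq_of_hasDerivWithinAt_eq_zero (f := fun τ => ∑ i, m i * ‖x i τ‖ ^ 2)
    (fun τ hτ => ?_) hs ht
  have hsum : ∑ i, m i * (2 * ⟪x i τ, velocity G m (x · τ) i⟫) = 0 := by
    simp only [mul_left_comm (m _) 2, ← mul_sum,
      sum_mul_inner_velocity_eq_zero hG hG_orth, mul_zero]
  rw [← hsum]
  exact HasDerivWithinAt.fun_sum fun i _ => (hode τ hτ i).norm_sq.const_mul (m i)

end Interaction

theorem Itilde_conserved_general (n : ℕ) (m : Fin n → ℝ)
    (x : Fin n → ℝ → EuclideanSpace ℝ (Fin 2)) (I : Set ℝ) (hI : I.OrdConnected)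
    (hode : ∀ t ∈ I, ∀ i, HasDerivWithinAt (x i)
      (∑ j ∈ Finset.univ.erase i, m j • K (x i t) (x j t)) I t) :
    ∀ s ∈ I, ∀ t ∈ I,
      ∑ p ∈ Finset.univ.filter (fun p : Fin n × Fin n => p.1 < p.2),
        m p.1 * m p.2 * ‖x p.1 s - x p.2 s‖ ^ 2
      = ∑ p ∈ Finset.univ.filter (fun p : Fin n × Fin n => p.1 < p.2),
        m p.1 * m p.2 * ‖x p.1 t - x p.2 t‖ ^ 2 := by
  have hode' : ∀ t ∈ I, ∀ i, HasDerivWithinAt (x i) (velocity K m (x · t) i) I t :=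
    fun t ht i => by
      rw [velocity, ← Finset.sum_erase _ (by rw [K_self, smul_zero])]
      exact hode t ht i
  intro s hs t ht
  rw [sum_filter_lt_mul_mul_norm_sub_sq m (x · s), sum_filter_lt_mul_mul_norm_sub_sq m (x · t),
    sum_smul_eq_of_hasDerivWithinAt_velocity K_swap hI hode' hs ht,
    sum_mul_norm_sq_eq_of_hasDerivWithinAt_velocity K_swap inner_sub_K hI hode' hs ht]

theorem Itilde_conserved (n : ℕ) (m : Fin n → ℝ) (hm : ∀ i, m i ≠ 0)
    (x : Fin n → ℝ → EuclideanSpace ℝ (Fin 2)) (I : Set ℝ) (hI : I.OrdConnected)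
    (hsep : ∀ t ∈ I, ∀ i j, i ≠ j → x i t ≠ x j t)
    (hode : ∀ t ∈ I, ∀ i, HasDerivWithinAt (x i)
      (∑ j ∈ Finset.univ.erase i, m j • K (x i t) (x j t)) I t) :
    ∀ s ∈ I, ∀ t ∈ I,
      ∑ p ∈ Finset.univ.filter (fun p : Fin n × Fin n => p.1 < p.2),
        m p.1 * m p.2 * ‖x p.1 s - x p.2 s‖ ^ 2
      = ∑ p ∈ Finset.univ.filter (fun p : Fin n × Fin n => p.1 < p.2),
        m p.1 * m p.2 * ‖x p.1 t - x p.2 t‖ ^ 2 :=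
  Itilde_conserved_general n m x I hI hode
end

section
/- Let x₁,…,xₖ ∈ ℝ² with center of mass x_S = (Σⱼ mⱼxⱼ)/(Σⱼ mⱼ) (with m_S = Σⱼ mⱼ ≠ 0), and suppose |xⱼ − x_S| ≤ a for all j. Let y ∈ ℝ² with |y − x_S| ≥ b, where b ≥ 10a·(1 + Σⱼ|mⱼ|/|m_S|). Then |Σⱼ mⱼ(K(y,xⱼ) − K(y,x_S))| ≤ C a²/b³ for a constant C depending only on the masses, where K(x,y) = (x-y)^⊥/|x-y|². (The linear terms in the Taylor expansion of K around y = x_S cancel by definition of the center of mass.) -/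
/-!
Identify ℝ² with ℂ. The conjugate of `K y x` is `-i / (y - x)`, so up to a unimodular factor the
sum is `∑ mⱼ ((y - xⱼ)⁻¹ - (y - x_S)⁻¹)`. Expanding `(y - x)⁻¹` around `x_S`, the linear terms
`mⱼ (xⱼ - x_S) / (y - x_S)²` sum to zero by definition of the center of mass, and each remainder
`mⱼ (xⱼ - x_S)² / ((y - xⱼ)(y - x_S)²)` is at most `|mⱼ| a² / ((b/2) b²)`, since
`|y - xⱼ| ≥ b - a ≥ b / 2`.
-/

open scoped RealInnerProductSpace

open Complex ComplexConjugate Finset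

theorem Finset.sum_smul_sub_centerMass {ι R E : Type*} [Field R] [AddCommGroup E] [Module R E]
    (t : Finset ι) (w : ι → R) (z : ι → E) (hw : ∑ i ∈ t, w i ≠ 0) :
    ∑ i ∈ t, w i • (z i - t.centerMass w z) = 0 := by
  simp only [smul_sub, sum_sub_distrib, ← sum_smul, centerMass, smul_inv_smul₀ hw, sub_self]

theorem inv_sub_sub_inv_sub_eq {𝕜 : Type*} [Field 𝕜] {B p q : 𝕜} (hp : B ≠ p) (hq : B ≠ q) :
    (B - p)⁻¹ - (B - q)⁻¹ = (p - q) / (B - q) ^ 2 + (p - q) ^ 2 / ((B - p) * (B - q) ^ 2) := by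
  have hp' : B - p ≠ 0 := sub_ne_zero.mpr hp
  have hq' : B - q ≠ 0 := sub_ne_zero.mpr hq
  field_simp
  ring

noncomputable def toComplex : EuclideanSpace ℝ (Fin 2) ≃ₗᵢ[ℝ] ℂ :=
  Complex.orthonormalBasisOneI.repr.symm

theorem toComplex_perp (z : EuclideanSpace ℝ (Fin 2)) : toComplex (perp z) = I * toComplex z := by
  apply Complex.ext <;> simp [toComplex, perp]

theorem conj_toComplex_K (u v : EuclideanSpace ℝ (Fin 2)) :
    conj (toComplex (K u v)) = -I * (toComplex u - toComplex v)⁻¹ := by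
  rw [K, map_smul, toComplex_perp, ← map_sub, ← toComplex.norm_map (u - v), inv_def,
    normSq_eq_norm_sq, real_smul, map_mul, map_mul, conj_I, conj_ofReal]
  push_cast
  ring

section Cauchy

variable {ι 𝕜 : Type*} [NormedField 𝕜] [NormedAlgebra ℝ 𝕜] {s : Finset ι} {m : ι → ℝ}
  {p : ι → 𝕜} {q B : 𝕜}

theorem sum_smul_inv_sub_sub_inv_sub_eq
    (hcenter : ∑ i ∈ s, m i • (p i - q) = 0) (hp : ∀ i ∈ s, B ≠ p i) (hq : B ≠ q) :
    ∑ i ∈ s, m i • ((B - p i)⁻¹ - (B - q)⁻¹) =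
      ∑ i ∈ s, m i • ((p i - q) ^ 2 / ((B - p i) * (B - q) ^ 2)) := by
  calc ∑ i ∈ s, m i • ((B - p i)⁻¹ - (B - q)⁻¹)
      = (∑ i ∈ s, m i • (p i - q)) / (B - q) ^ 2 +
          ∑ i ∈ s, m i • ((p i - q) ^ 2 / ((B - p i) * (B - q) ^ 2)) := by
        rw [sum_div, ← sum_add_distrib]
        refine sum_congr rfl fun i hi => ?_
        rw [inv_sub_sub_inv_sub_eq (hp i hi) hq, smul_add, smul_div_assoc]
    _ = _ := by rw [hcenter, zero_div, zero_add]

theorem norm_sum_smul_inv_sub_sub_inv_sub_le {a b : ℝ}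
    (hcenter : ∑ i ∈ s, m i • (p i - q) = 0) (hp : ∀ i ∈ s, ‖p i - q‖ ≤ a)
    (hb : 0 < b) (hab : 2 * a ≤ b) (hB : b ≤ ‖B - q‖) :
    ‖∑ i ∈ s, m i • ((B - p i)⁻¹ - (B - q)⁻¹)‖ ≤ 2 * (∑ i ∈ s, |m i|) * a ^ 2 / b ^ 3 := by
  have hBp : ∀ i ∈ s, b / 2 ≤ ‖B - p i‖ := fun i hi => by
    have := norm_sub_norm_le (B - q) (p i - q)
    rw [sub_sub_sub_cancel_right] at this
    linarith [hp i hi]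
  have hq : B ≠ q := fun h => by simp [h] at hB; linarith
  have hpi : ∀ i ∈ s, B ≠ p i := fun i hi h => by have := hBp i hi; simp [h] at this; linarith
  rw [sum_smul_inv_sub_sub_inv_sub_eq hcenter hpi hq]
  calc ‖∑ i ∈ s, m i • ((p i - q) ^ 2 / ((B - p i) * (B - q) ^ 2))‖
      ≤ ∑ i ∈ s, |m i| * (a ^ 2 / (b / 2 * b ^ 2)) := by
        refine (norm_sum_le _ _).trans (sum_le_sum fun i hi => ?_)
        rw [norm_smul, Real.norm_eq_abs, norm_div, norm_mul, norm_pow, norm_pow]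
        gcongr
        exacts [hp i hi, hBp i hi]
    _ = 2 * (∑ i ∈ s, |m i|) * a ^ 2 / b ^ 3 := by
        rw [← sum_mul]
        field_simp

end Cauchy

theorem norm_sum_smul_K_sub_K {ι : Type*} (s : Finset ι) (m : ι → ℝ)
    (x : ι → EuclideanSpace ℝ (Fin 2)) (y c : EuclideanSpace ℝ (Fin 2)) :
    ‖∑ i ∈ s, m i • (K y (x i) - K y c)‖ =
      ‖∑ i ∈ s, m i • ((toComplex y - toComplex (x i))⁻¹ - (toComplex y - toComplex c)⁻¹)‖ := by
  rw [← (toComplex.trans conjLIE).norm_map, map_sum]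
  simp only [map_smul, map_sub, LinearIsometryEquiv.trans_apply, conjLIE_apply, conj_toComplex_K,
    ← mul_sub, ← mul_smul_comm]
  rw [← mul_sum, norm_mul, norm_neg, norm_I, one_mul]

theorem cluster_taylor_bound (k : ℕ) (m : Fin k → ℝ) (hmS : ∑ j, m j ≠ 0) :
    ∃ C > (0 : ℝ), ∀ (a b : ℝ) (x : Fin k → EuclideanSpace ℝ (Fin 2))
      (y : EuclideanSpace ℝ (Fin 2)),
      (∀ j, ‖x j - (∑ j, m j)⁻¹ • ∑ j, m j • x j‖ ≤ a) →
      b ≤ ‖y - (∑ j, m j)⁻¹ • ∑ j, m j • x j‖ →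
      10 * a * (1 + (∑ j, |m j|) / |∑ j, m j|) ≤ b →
      ‖∑ j, m j • (K y (x j) - K y ((∑ j, m j)⁻¹ • ∑ j, m j • x j))‖
        ≤ C * a ^ 2 / b ^ 3 := by
  refine ⟨2 * ∑ j, |m j| + 1, by positivity, fun a b x y hx hy hab => ?_⟩
  rw [← centerMass.eq_1] at hx hy ⊢
  set xS := univ.centerMass m x
  obtain ⟨j₀, -, -⟩ := exists_ne_zero_of_sum_ne_zero hmS
  have ha : 0 ≤ a := (norm_nonneg _).trans (hx j₀)
  have h2ab : 2 * a ≤ b := by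
    have : 0 ≤ (∑ j, |m j|) / |∑ j, m j| := by positivity
    nlinarith
  rcases (show 0 ≤ b by linarith).eq_or_lt with hb | hb
  · have hxS : ∀ j, x j = xS := fun j =>
      sub_eq_zero.mp (norm_le_zero_iff.mp ((hx j).trans (by linarith)))
    simp [hxS, ← hb]
  · rw [norm_sum_smul_K_sub_K]
    calc _ ≤ 2 * (∑ j, |m j|) * a ^ 2 / b ^ 3 := by
          refine norm_sum_smul_inv_sub_sub_inv_sub_le ?_ (fun j _ => ?_) hb h2ab ?_
          · simpa only [map_sum, map_smul, map_sub, map_zero] using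
              congrArg toComplex (univ.sum_smul_sub_centerMass m x hmS)
          · simpa only [← map_sub, LinearIsometryEquiv.norm_map] using hx j
          · simpa only [← map_sub, LinearIsometryEquiv.norm_map] using hy
      _ ≤ _ := by gcongr; linarith
end
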